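/- arXiv:2309.15360 — 6 statements merged into one kernel-verified Lean document; each statement's English description precedes it below -/
import Mathlib

section
/- For all nonnegative integers n and r, (r+1)! * C_{n,r} = ∑_{k=0}^{r} (-1)^k (2n-2k+1) * binom(n+5/12, k) * binom(n-k-5/12, r-k) * k! * (r-k)!, where C_{n,r} = (-1)^r * binom(n+5/12, r+1) + binom(n+7/12, r+1) and binom(x, m) = x(x-1)...(x-m+1)/m! is the generalized binomial coefficient for real x. -/
open Finset

/-- Generalized binomial coefficient `binom(x, m) = x(x-1)⋯(x-m+1)/m!` for rational `x`. -/
noncomputable def genBinom (x : ℚ) (m : ℕ) : ℚ :=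
  (∏ i ∈ Finset.range m, (x - (i : ℚ))) / (m.factorial : ℚ)

/-- `C_{n,r} = (-1)^r * binom(n+5/12, r+1) + binom(n+7/12, r+1)`. -/
noncomputable def Cnr (n r : ℕ) : ℚ :=
  (-1 : ℚ) ^ r * genBinom ((n : ℚ) + 5 / 12) (r + 1) + genBinom ((n : ℚ) + 7 / 12) (r + 1)

/-!
Clearing the factorials, the identity is one between falling factorials `(x)ₘ = x(x-1)⋯(x-m+1)`
with `x = n + 5/12`, `y = n + 7/12`, and it holds for arbitrary `x, y` in a commutative ring:
`(-1)^r (x)_{r+1} + (y)_{r+1} = ∑_{k ≤ r} (-1)^k (x + y - 2k) (x)_k (y-1-k)_{r-k}`.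
The sum telescopes: splitting `x + y - 2k = (x - k) + (y - k)`, the `k`-th term is
`g k - g (k+1)` for `g k = (-1)^k (x)_k (y-k)_{r+1-k}`.
-/

open Polynomial

section FallingFactorial

variable {R : Type*} [CommRing R]

theorem descPochhammer_succ_eval_eq_mul_eval_sub_one (n : ℕ) (y : R) :
    (descPochhammer R (n + 1)).eval y = y * (descPochhammer R n).eval (y - 1) := by
  simp [descPochhammer_succ_left, eval_comp]

theorem alternating_descPochhammer_term_eq_sub (x y : R) {k r : ℕ} (hk : k ≤ r) :
    (-1) ^ k * (x + y - 2 * k) * (descPochhammer R k).eval x *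
        (descPochhammer R (r - k)).eval (y - 1 - k) =
      (-1) ^ k * (descPochhammer R k).eval x * (descPochhammer R (r + 1 - k)).eval (y - k) -
        (-1) ^ (k + 1) * (descPochhammer R (k + 1)).eval x *
          (descPochhammer R (r + 1 - (k + 1))).eval (y - (k + 1 : ℕ)) := by
  rw [show r + 1 - k = r - k + 1 by omega, Nat.add_sub_add_right,
    descPochhammer_succ_eval_eq_mul_eval_sub_one, descPochhammer_succ_eval]
  push_cast
  ring_nf

theorem neg_one_pow_mul_descPochhammer_eval_add_eq_sum (x y : R) (r : ℕ) :
    (-1) ^ r * (descPochhammer R (r + 1)).eval x + (descPochhammer R (r + 1)).eval y =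
      ∑ k ∈ range (r + 1), (-1) ^ k * (x + y - 2 * k) * (descPochhammer R k).eval x *
        (descPochhammer R (r - k)).eval (y - 1 - k) := by
  rw [sum_congr rfl fun k hk =>
    alternating_descPochhammer_term_eq_sub x y (Nat.lt_succ_iff.mp (mem_range.mp hk)),
    sum_range_sub' (fun k => (-1) ^ k * (descPochhammer R k).eval x *
      (descPochhammer R (r + 1 - k)).eval (y - k))]
  simp only [pow_succ, Nat.sub_self, Nat.sub_zero, descPochhammer_zero, eval_one, Nat.cast_zero,
    sub_zero]
  ring

end FallingFactorial

theorem genBinom_eq_descPochhammer_eval_div (x : ℚ) (m : ℕ) :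
    genBinom x m = (descPochhammer ℚ m).eval x / m.factorial := by
  rw [genBinom, descPochhammer_eval_eq_prod_range]

/-- For all nonnegative integers `n` and `r`,
`(r+1)! * C_{n,r} = ∑_{k=0}^{r} (-1)^k (2n-2k+1) binom(n+5/12, k) binom(n-k-5/12, r-k) k! (r-k)!`. -/
theorem factorial_mul_Cnr_eq_sum (n r : ℕ) :
    ((r + 1).factorial : ℚ) * Cnr n r =
      ∑ k ∈ Finset.range (r + 1),
        (-1 : ℚ) ^ k * (2 * (n : ℚ) - 2 * (k : ℚ) + 1) *
          genBinom ((n : ℚ) + 5 / 12) k * genBinom ((n : ℚ) - (k : ℚ) - 5 / 12) (r - k) *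
          (k.factorial : ℚ) * ((r - k).factorial : ℚ) := by
  calc _ = (-1) ^ r * (descPochhammer ℚ (r + 1)).eval ((n : ℚ) + 5 / 12) +
          (descPochhammer ℚ (r + 1)).eval ((n : ℚ) + 7 / 12) := by
        simp only [Cnr, genBinom_eq_descPochhammer_eval_div]
        field_simp
    _ = _ := neg_one_pow_mul_descPochhammer_eval_add_eq_sum _ _ r
    _ = _ := by
        refine sum_congr rfl fun k _ => ?_
        simp only [genBinom_eq_descPochhammer_eval_div]
        field_simp
        ring_nf
end

section
/- The identity of differential operators K^up_{w+6} ∘ K^up_w = E₄² L_w - ((w+6)/6) E₆ K^up_w + 12(w+1)(w+5) Δ holds, where L_w = ∂_{w-1}² - ((w²-1)/144) E₄, K^up_w = E₄ ∂_{w-1} - ((w+1)/12) E₆, acting on quasimodular forms of weight w. -/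
open PowerSeries

/-- The operator `D = q d/dq` acting on `q`-expansions (formal power series in `q`). -/
noncomputable def Dq (f : PowerSeries ℚ) : PowerSeries ℚ :=
  PowerSeries.mk fun n => (n : ℚ) * PowerSeries.coeff n f

/-- The normalized Eisenstein series `E₂ = 1 - 24 ∑ σ₁(n) qⁿ`. -/
noncomputable def E2 : PowerSeries ℚ :=
  PowerSeries.mk fun n => if n = 0 then 1 else -24 * ∑ d ∈ n.divisors, (d : ℚ)

/-- The normalized Eisenstein series `E₄ = 1 + 240 ∑ σ₃(n) qⁿ`. -/
noncomputable def E4 : PowerSeries ℚ :=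
  PowerSeries.mk fun n => if n = 0 then 1 else 240 * ∑ d ∈ n.divisors, (d : ℚ) ^ 3

/-- The normalized Eisenstein series `E₆ = 1 - 504 ∑ σ₅(n) qⁿ`. -/
noncomputable def E6 : PowerSeries ℚ :=
  PowerSeries.mk fun n => if n = 0 then 1 else -504 * ∑ d ∈ n.divisors, (d : ℚ) ^ 5

/-- The discriminant `Δ = (E₄³ - E₆²)/1728`. -/
noncomputable def Δmf : PowerSeries ℚ := PowerSeries.C (1 / 1728 : ℚ) * (E4 ^ 3 - E6 ^ 2)

/-- The Serre derivative `∂ₖ = D - (k/12)E₂`. -/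
noncomputable def serreD (k : ℚ) (f : PowerSeries ℚ) : PowerSeries ℚ :=
  Dq f - PowerSeries.C (k / 12) * E2 * f

/-- `L_w = ∂_{w-1}² - ((w²-1)/144)E₄`, with `∂_{w-1}² = ∂_{w+1} ∘ ∂_{w-1}`. -/
noncomputable def Lop (w : ℚ) (f : PowerSeries ℚ) : PowerSeries ℚ :=
  serreD (w + 1) (serreD (w - 1) f) - PowerSeries.C ((w ^ 2 - 1) / 144) * E4 * f

/-- `K^up_w = E₄ ∂_{w-1} - ((w+1)/12) E₆`. -/
noncomputable def Kup (w : ℚ) (f : PowerSeries ℚ) : PowerSeries ℚ :=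
  E4 * serreD (w - 1) f - PowerSeries.C ((w + 1) / 12) * E6 * f

/-!
The Serre derivative obeys the Leibniz rule `∂_{k+l} (f g) = (∂_k f) g + f (∂_l g)`, and
Ramanujan's identities read `∂₄ E₄ = -E₆ / 3` and `∂₆ E₆ = -E₄² / 2`. With these rules both sides
of the identity expand into polynomials in `E₄`, `E₆`, `f`, `∂_{w-1} f` and `∂_{w+1} ∂_{w-1} f`,
in which `E₂` no longer occurs, and they agree as such polynomials.

On `q`-expansions, Ramanujan's identities are the classical convolution identities for the divisor
sums `σ₁ * σ₃`, `σ₁ * σ₅` and `σ₃ * σ₃`. These follow from Liouville's elementary method: a sum over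
the positive solutions of `a x + b y = n` is compared with its images under the swap
`(a, x) ↔ (b, y)` and the shear `(a, x, b, y) ↦ (a, x + y, b - a, y)`. What is left are the
diagonals `a = b` and `x = y`, which are divisor sums of power sums.
-/

open Finset

theorem coeff_ofNat_mul {R : Type*} [Semiring R] (k : ℕ) [k.AtLeastTwo] (n : ℕ) (f : R⟦X⟧) :
    coeff n (ofNat(k) * f) = ofNat(k) * coeff n f := by
  rw [← map_ofNat C, coeff_C_mul]

theorem coeff_Dq (f : ℚ⟦X⟧) (n : ℕ) : coeff n (Dq f) = n * coeff n f := coeff_mk _ _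

theorem Dq_eq_X_mul_derivative (f : ℚ⟦X⟧) : Dq f = X * d⁄dX ℚ f := by
  ext (_ | n)
  · simp [coeff_Dq]
  · rw [coeff_succ_X_mul, coeff_derivative, coeff_Dq]
    push_cast
    ring

theorem Dq_add (f g : ℚ⟦X⟧) : Dq (f + g) = Dq f + Dq g := by
  simp only [Dq_eq_X_mul_derivative, map_add, mul_add]

theorem Dq_sub (f g : ℚ⟦X⟧) : Dq (f - g) = Dq f - Dq g := by
  simp only [Dq_eq_X_mul_derivative, map_sub, mul_sub]

theorem Dq_mul (f g : ℚ⟦X⟧) : Dq (f * g) = Dq f * g + f * Dq g := by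
  simp only [Dq_eq_X_mul_derivative, Derivation.leibniz, smul_eq_mul]
  ring

theorem Dq_C (c : ℚ) : Dq (C c) = 0 := by
  rw [Dq_eq_X_mul_derivative, derivative_C, mul_zero]

theorem Dq_one : Dq 1 = 0 := by
  simpa using Dq_C 1

theorem Dq_ofNat (k : ℕ) [k.AtLeastTwo] : Dq ofNat(k) = 0 := by
  rw [← map_ofNat C, Dq_C]

theorem serreD_sub (k : ℚ) (f g : ℚ⟦X⟧) : serreD k (f - g) = serreD k f - serreD k g := by
  simp only [serreD, Dq_sub]
  ring

theorem serreD_C_mul (k c : ℚ) (f : ℚ⟦X⟧) : serreD k (C c * f) = C c * serreD k f := by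
  simp only [serreD, Dq_mul, Dq_C]
  ring

theorem serreD_add_mul (k l : ℚ) (f g : ℚ⟦X⟧) :
    serreD (k + l) (f * g) = serreD k f * g + f * serreD l g := by
  simp only [serreD, Dq_mul, add_div, map_add]
  ring

theorem Finset.sum_eq_sum_filter_lt_add_sum_filter_gt_add_sum_filter_eq {ι β M : Type*}
    [LinearOrder β] [AddCommMonoid M] (s : Finset ι) (u v : ι → β) (F : ι → M) :
    ∑ i ∈ s, F i = ∑ i ∈ s with u i < v i, F i + ∑ i ∈ s with v i < u i, F i +
      ∑ i ∈ s with u i = v i, F i := by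
  rw [← sum_filter_add_sum_filter_not s (fun i => u i < v i),
    ← sum_filter_add_sum_filter_not (s.filter fun i => ¬u i < v i) (fun i => v i < u i),
    filter_filter, filter_filter, add_assoc]
  congr 3 <;> ext i <;> simp only [mem_filter] <;> grind

def reps (n : ℕ) : Finset ((ℕ × ℕ) × ℕ × ℕ) :=
  {p ∈ (Icc 1 n ×ˢ Icc 1 n) ×ˢ Icc 1 n ×ˢ Icc 1 n | p.1.1 * p.1.2 + p.2.1 * p.2.2 = n}

theorem mem_reps {n a x b y : ℕ} :
    ((a, x), (b, y)) ∈ reps n ↔ 0 < a ∧ 0 < x ∧ 0 < b ∧ 0 < y ∧ a * x + b * y = n := by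
  simp only [reps, mem_filter, mem_product, mem_Icc]
  constructor
  · rintro ⟨⟨⟨⟨ha, _⟩, _, _⟩, ⟨hb, _⟩, _, _⟩, h⟩
    exact ⟨ha, by omega, hb, by omega, h⟩
  · rintro ⟨ha, hx, hb, hy, h⟩
    have := Nat.le_mul_of_pos_right a hx
    have := Nat.le_mul_of_pos_left x ha
    have := Nat.le_mul_of_pos_right b hy
    have := Nat.le_mul_of_pos_left y hb
    omega

theorem swap_mem_reps {n : ℕ} {p : (ℕ × ℕ) × ℕ × ℕ} (hp : p ∈ reps n) : p.swap ∈ reps n := by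
  obtain ⟨⟨a, x⟩, b, y⟩ := p
  obtain ⟨ha, hx, hb, hy, h⟩ := mem_reps.1 hp
  exact mem_reps.2 ⟨hb, hy, ha, hx, by omega⟩

theorem sum_reps_filter_swap {M : Type*} [AddCommMonoid M] (n : ℕ)
    (r : (ℕ × ℕ) × ℕ × ℕ → Prop) [DecidablePred r] (F : (ℕ × ℕ) × ℕ × ℕ → M) :
    ∑ p ∈ reps n with r p.swap, F p.swap = ∑ p ∈ reps n with r p, F p := by
  refine sum_nbij' Prod.swap Prod.swap ?_ ?_ (fun p _ => p.swap_swap) (fun p _ => p.swap_swap)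
    (fun _ _ => rfl)
  · intro p hp
    simp only [mem_filter] at hp ⊢
    exact ⟨swap_mem_reps hp.1, hp.2⟩
  · intro p hp
    simp only [mem_filter, Prod.swap_swap] at hp ⊢
    exact ⟨swap_mem_reps hp.1, hp.2⟩

theorem sum_reps_shear {M : Type*} [AddCommMonoid M] (n : ℕ) (F : (ℕ × ℕ) × ℕ × ℕ → M) :
    ∑ p ∈ reps n with p.1.1 < p.2.1, F ((p.1.1, p.1.2 + p.2.2), p.2.1 - p.1.1, p.2.2) =
      ∑ p ∈ reps n with p.2.2 < p.1.2, F p := by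
  refine sum_nbij' (fun p => ((p.1.1, p.1.2 + p.2.2), p.2.1 - p.1.1, p.2.2))
    (fun p => ((p.1.1, p.1.2 - p.2.2), p.2.1 + p.1.1, p.2.2)) ?_ ?_ ?_ ?_ (fun _ _ => rfl)
  · rintro ⟨⟨a, x⟩, b, y⟩ hp
    simp only [mem_filter, mem_reps] at hp ⊢
    obtain ⟨⟨ha, hx, hb, hy, he⟩, hab⟩ := hp
    have : a * y ≤ b * y := Nat.mul_le_mul_right y hab.le
    have : a * (x + y) + (b - a) * y = a * x + b * y := by
      rw [Nat.mul_add, Nat.sub_mul]; omega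
    exact ⟨⟨ha, by omega, by omega, hy, by omega⟩, by omega⟩
  · rintro ⟨⟨a, x⟩, b, y⟩ hp
    simp only [mem_filter, mem_reps] at hp ⊢
    obtain ⟨⟨ha, hx, hb, hy, he⟩, hyx⟩ := hp
    have : a * y ≤ a * x := Nat.mul_le_mul_left a hyx.le
    have : a * (x - y) + (b + a) * y = a * x + b * y := by
      rw [Nat.mul_sub, Nat.add_mul]; omega
    exact ⟨⟨ha, by omega, by omega, hy, by omega⟩, by omega⟩
  · rintro ⟨⟨a, x⟩, b, y⟩ hp
    simp only [mem_filter] at hp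
    obtain ⟨-, hlt⟩ := hp
    simp only [Prod.mk.injEq, true_and, and_true]
    omega
  · rintro ⟨⟨a, x⟩, b, y⟩ hp
    simp only [mem_filter] at hp
    obtain ⟨-, hlt⟩ := hp
    simp only [Prod.mk.injEq, true_and, and_true]
    omega

theorem sum_reps_filter_a_eq_b (n : ℕ) (g : ℕ → ℚ) :
    ∑ p ∈ reps n with p.1.1 = p.2.1, g p.1.1 =
      ∑ d ∈ n.divisors, (((n / d : ℕ) : ℚ) - 1) * g d := by
  have hsigma : ∑ p ∈ reps n with p.1.1 = p.2.1, g p.1.1 =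
      ∑ q ∈ n.divisors.sigma (fun d => Ico 1 (n / d)), g q.1 := by
    refine sum_nbij' (fun p => (⟨p.1.1, p.1.2⟩ : Σ _ : ℕ, ℕ))
      (fun q => ((q.1, q.2), q.1, n / q.1 - q.2)) ?_ ?_ ?_ (fun _ _ => rfl) (fun _ _ => rfl)
    · rintro ⟨⟨a, x⟩, b, y⟩ hp
      simp only [mem_filter, mem_reps] at hp
      obtain ⟨⟨ha, hx, hb, hy, he⟩, hdiag⟩ := hp
      subst hdiag
      have hd : a * (x + y) = n := by rw [Nat.mul_add]; omega
      have hq : n / a = x + y := by rw [← hd, Nat.mul_div_cancel_left _ ha]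
      simp only [mem_sigma, mem_Ico, Nat.mem_divisors]
      exact ⟨⟨⟨x + y, hd.symm⟩, by rw [← hd]; positivity⟩, by omega, by omega⟩
    · rintro ⟨d, x⟩ hq
      simp only [mem_sigma, mem_Ico, Nat.mem_divisors] at hq
      obtain ⟨⟨hdvd, hn⟩, hx1, hx2⟩ := hq
      have hd : 0 < d := Nat.pos_of_dvd_of_pos hdvd (Nat.pos_of_ne_zero hn)
      have he : d * x + d * (n / d - x) = n := by
        rw [← Nat.mul_add, Nat.add_sub_cancel' hx2.le, Nat.mul_div_cancel' hdvd]
      simp only [mem_filter, mem_reps]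
      exact ⟨⟨hd, by omega, hd, by omega, he⟩, trivial⟩
    · rintro ⟨⟨a, x⟩, b, y⟩ hp
      simp only [mem_filter, mem_reps] at hp
      obtain ⟨⟨ha, hx, hb, hy, he⟩, hdiag⟩ := hp
      subst hdiag
      have hd : a * (x + y) = n := by rw [Nat.mul_add]; omega
      have hq : n / a = x + y := by rw [← hd, Nat.mul_div_cancel_left _ ha]
      simp only [Prod.mk.injEq, true_and]
      omega
  rw [hsigma, sum_sigma]
  refine sum_congr rfl fun d hd => ?_
  obtain ⟨hdvd, hn⟩ := Nat.mem_divisors.1 hd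
  have : 1 ≤ n / d := Nat.div_pos (Nat.le_of_dvd (Nat.pos_of_ne_zero hn) hdvd)
    (Nat.pos_of_dvd_of_pos hdvd (Nat.pos_of_ne_zero hn))
  simp only [sum_const, Nat.card_Ico, nsmul_eq_mul, Nat.cast_sub this, Nat.cast_one]

theorem sum_reps_filter_x_eq_y (n : ℕ) (g : ℕ → ℕ → ℚ) :
    ∑ p ∈ reps n with p.1.2 = p.2.2, g p.1.1 p.2.1 =
      ∑ e ∈ n.divisors, ∑ a ∈ Ico 1 e, g a (e - a) := by
  rw [sum_sigma']
  refine sum_nbij' (fun p => (⟨p.1.1 + p.2.1, p.1.1⟩ : Σ _ : ℕ, ℕ))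
    (fun q => ((q.2, n / q.1), q.1 - q.2, n / q.1)) ?_ ?_ ?_ ?_ ?_
  · rintro ⟨⟨a, x⟩, b, y⟩ hp
    simp only [mem_filter, mem_reps] at hp
    obtain ⟨⟨ha, hx, hb, hy, he⟩, hdiag⟩ := hp
    subst hdiag
    have hd : (a + b) * x = n := by rw [Nat.add_mul]; omega
    simp only [mem_sigma, mem_Ico, Nat.mem_divisors]
    exact ⟨⟨⟨x, hd.symm⟩, by rw [← hd]; positivity⟩, by omega, by omega⟩
  · rintro ⟨e, a⟩ hq
    simp only [mem_sigma, mem_Ico, Nat.mem_divisors] at hq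
    obtain ⟨⟨hdvd, hn⟩, ha1, ha2⟩ := hq
    have hx : 0 < n / e := Nat.div_pos (Nat.le_of_dvd (Nat.pos_of_ne_zero hn) hdvd) (by omega)
    have he : a * (n / e) + (e - a) * (n / e) = n := by
      rw [← Nat.add_mul, Nat.add_sub_cancel' ha2.le, Nat.mul_div_cancel' hdvd]
    simp only [mem_filter, mem_reps]
    exact ⟨⟨by omega, hx, by omega, hx, he⟩, trivial⟩
  · rintro ⟨⟨a, x⟩, b, y⟩ hp
    simp only [mem_filter, mem_reps] at hp
    obtain ⟨⟨ha, hx, hb, hy, he⟩, hdiag⟩ := hp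
    subst hdiag
    have hd : (a + b) * x = n := by rw [Nat.add_mul]; omega
    have hq : n / (a + b) = x := by rw [← hd, Nat.mul_div_cancel_left _ (by omega)]
    simp only [Prod.mk.injEq, true_and]
    omega
  · rintro ⟨e, a⟩ hq
    simp only [mem_sigma, mem_Ico] at hq
    simp only [Sigma.mk.injEq, heq_eq_eq, and_true]
    omega
  · rintro ⟨⟨a, x⟩, b, y⟩ _
    simp only [Nat.add_sub_cancel_left]

/-- The shear turns the solutions with `a < b` into those with `y < x`, changing `Q a (b - a)` into
`Q a b`; by the swap symmetry, only the diagonals `a = b` and `x = y` remain. -/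
theorem two_mul_sum_reps (n : ℕ) (P Q : ℚ → ℚ → ℚ) (hQ : ∀ a b, Q a b = Q b a)
    (hPQ : ∀ a b, Q a (b - a) = Q a b + P a b + P b a) :
    2 * ∑ p ∈ reps n, P p.1.1 p.2.1 =
      ∑ d ∈ n.divisors, (((n / d : ℕ) : ℚ) - 1) * (Q d d + 2 * P d d) -
        ∑ e ∈ n.divisors, ∑ a ∈ Ico 1 e, Q a (e - a) := by
  have shear : ∑ p ∈ reps n with p.1.1 < p.2.1,
      (Q p.1.1 p.2.1 + P p.1.1 p.2.1 + P p.2.1 p.1.1) =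
        ∑ p ∈ reps n with p.2.2 < p.1.2, Q p.1.1 p.2.1 := by
    rw [← sum_reps_shear n fun p => Q p.1.1 p.2.1]
    refine sum_congr rfl fun p hp => ?_
    rw [Nat.cast_sub (mem_filter.1 hp).2.le, hPQ]
  have swapP : ∑ p ∈ reps n with p.1.1 < p.2.1, P p.2.1 p.1.1 =
      ∑ p ∈ reps n with p.2.1 < p.1.1, P p.1.1 p.2.1 :=
    sum_reps_filter_swap n (fun p => p.2.1 < p.1.1) fun p => P p.1.1 p.2.1
  have swapQ : ∑ p ∈ reps n with p.1.1 < p.2.1, Q p.1.1 p.2.1 =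
      ∑ p ∈ reps n with p.2.1 < p.1.1, Q p.1.1 p.2.1 := by
    simp only [← sum_reps_filter_swap n (fun p => p.2.1 < p.1.1), Prod.fst_swap, Prod.snd_swap, hQ]
  have swapQ' : ∑ p ∈ reps n with p.1.2 < p.2.2, Q p.1.1 p.2.1 =
      ∑ p ∈ reps n with p.2.2 < p.1.2, Q p.1.1 p.2.1 := by
    simp only [← sum_reps_filter_swap n (fun p => p.2.2 < p.1.2), Prod.fst_swap, Prod.snd_swap, hQ]
  have diag (R : ℚ → ℚ → ℚ) : ∑ p ∈ reps n with p.1.1 = p.2.1, R p.1.1 p.2.1 =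
      ∑ d ∈ n.divisors, (((n / d : ℕ) : ℚ) - 1) * R d d := by
    rw [← sum_reps_filter_a_eq_b n fun d => R d d]
    exact sum_congr rfl fun p hp => by rw [(mem_filter.1 hp).2]
  have diagQ' : ∑ p ∈ reps n with p.1.2 = p.2.2, Q p.1.1 p.2.1 =
      ∑ e ∈ n.divisors, ∑ a ∈ Ico 1 e, Q a (e - a) := by
    rw [sum_reps_filter_x_eq_y n fun a b => Q a b]
    refine sum_congr rfl fun e _ => sum_congr rfl fun a ha => ?_
    rw [Nat.cast_sub (mem_Ico.1 ha).2.le]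
  have splitP := sum_eq_sum_filter_lt_add_sum_filter_gt_add_sum_filter_eq (reps n)
    (fun p => p.1.1) (fun p => p.2.1) fun p => P p.1.1 p.2.1
  have splitQ := sum_eq_sum_filter_lt_add_sum_filter_gt_add_sum_filter_eq (reps n)
    (fun p => p.1.1) (fun p => p.2.1) fun p => Q p.1.1 p.2.1
  have splitQ' := sum_eq_sum_filter_lt_add_sum_filter_gt_add_sum_filter_eq (reps n)
    (fun p => p.1.2) (fun p => p.2.2) fun p => Q p.1.1 p.2.1
  have diagQ := diag Q
  have diagP := diag P
  simp only [mul_add, sum_add_distrib, mul_left_comm _ (2 : ℚ), ← mul_sum]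
  rw [sum_add_distrib, sum_add_distrib] at shear
  linarith

theorem sum_divisors_div_sub_one_mul_pow (n k : ℕ) :
    ∑ d ∈ n.divisors, (((n / d : ℕ) : ℚ) - 1) * (d : ℚ) ^ (k + 1) =
      n * ∑ d ∈ n.divisors, (d : ℚ) ^ k - ∑ d ∈ n.divisors, (d : ℚ) ^ (k + 1) := by
  rw [mul_sum, ← sum_sub_distrib]
  refine sum_congr rfl fun d hd => ?_
  have hd0 : (d : ℚ) ≠ 0 := Nat.cast_ne_zero.2 (Nat.pos_of_mem_divisors hd).ne'
  rw [Nat.cast_div (Nat.dvd_of_mem_divisors hd) hd0]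
  field_simp
  ring

theorem two_mul_sum_reps_of_diag (n : ℕ) (P Q : ℚ → ℚ → ℚ) (c : ℚ) (k : ℕ)
    (hQ : ∀ a b, Q a b = Q b a) (hPQ : ∀ a b, Q a (b - a) = Q a b + P a b + P b a)
    (hdiag : ∀ d, Q d d + 2 * P d d = c * d ^ (k + 1)) :
    2 * ∑ p ∈ reps n, P p.1.1 p.2.1 =
      c * (n * ∑ d ∈ n.divisors, (d : ℚ) ^ k - ∑ d ∈ n.divisors, (d : ℚ) ^ (k + 1)) -
        ∑ e ∈ n.divisors, ∑ a ∈ Ico 1 e, Q a (e - a) := by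
  rw [two_mul_sum_reps n P Q hQ hPQ, ← sum_divisors_div_sub_one_mul_pow, mul_sum]
  simp only [hdiag, mul_left_comm c]

theorem sum_range_cast (e : ℕ) : ∑ a ∈ range e, (a : ℚ) = e ^ 2 / 2 - e / 2 := by
  induction e with
  | zero => simp
  | succ m ih => rw [sum_range_succ, ih]; push_cast; ring

theorem sum_range_cast_pow_two (e : ℕ) :
    ∑ a ∈ range e, (a : ℚ) ^ 2 = e ^ 3 / 3 - e ^ 2 / 2 + e / 6 := by
  induction e with
  | zero => simp
  | succ m ih => rw [sum_range_succ, ih]; push_cast; ring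

theorem sum_range_cast_pow_three (e : ℕ) :
    ∑ a ∈ range e, (a : ℚ) ^ 3 = e ^ 4 / 4 - e ^ 3 / 2 + e ^ 2 / 4 := by
  induction e with
  | zero => simp
  | succ m ih => rw [sum_range_succ, ih]; push_cast; ring

theorem sum_range_cast_pow_four (e : ℕ) :
    ∑ a ∈ range e, (a : ℚ) ^ 4 = e ^ 5 / 5 - e ^ 4 / 2 + e ^ 3 / 3 - e / 30 := by
  induction e with
  | zero => simp
  | succ m ih => rw [sum_range_succ, ih]; push_cast; ring

theorem sum_range_cast_pow_five (e : ℕ) :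
    ∑ a ∈ range e, (a : ℚ) ^ 5 = e ^ 6 / 6 - e ^ 5 / 2 + 5 * e ^ 4 / 12 - e ^ 2 / 12 := by
  induction e with
  | zero => simp
  | succ m ih => rw [sum_range_succ, ih]; push_cast; ring

theorem sum_range_cast_pow_six (e : ℕ) :
    ∑ a ∈ range e, (a : ℚ) ^ 6 = e ^ 7 / 7 - e ^ 6 / 2 + e ^ 5 / 2 - e ^ 3 / 6 + e / 42 := by
  induction e with
  | zero => simp
  | succ m ih => rw [sum_range_succ, ih]; push_cast; ring

def sigmaSeries (k : ℕ) : ℚ⟦X⟧ := mk fun n => ∑ d ∈ n.divisors, (d : ℚ) ^ k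

theorem coeff_sigmaSeries (k n : ℕ) :
    coeff n (sigmaSeries k) = ∑ d ∈ n.divisors, (d : ℚ) ^ k := coeff_mk _ _

theorem coeff_sigmaSeries_mul (i j n : ℕ) :
    coeff n (sigmaSeries i * sigmaSeries j) = ∑ p ∈ reps n, (p.1.1 : ℚ) ^ i * (p.2.1 : ℚ) ^ j := by
  have hmaps : ∀ p ∈ reps n, p.1.1 * p.1.2 ∈ range (n + 1) := by
    rintro ⟨⟨a, x⟩, b, y⟩ hp
    obtain ⟨-, -, -, -, he⟩ := mem_reps.1 hp
    exact mem_range.2 (show a * x < n + 1 by omega)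
  rw [coeff_mul, Nat.sum_antidiagonal_eq_sum_range_succ_mk, ← sum_fiberwise_of_maps_to hmaps]
  refine sum_congr rfl fun k hk => ?_
  rw [coeff_sigmaSeries, coeff_sigmaSeries, sum_mul_sum, ← sum_product']
  have hkn := mem_range.1 hk
  refine sum_nbij' (fun q => ((q.1, k / q.1), q.2, (n - k) / q.2)) (fun p => (p.1.1, p.2.1))
    ?_ ?_ (fun _ _ => rfl) ?_ (fun _ _ => rfl)
  · rintro ⟨a, b⟩ hq
    simp only [mem_product, Nat.mem_divisors] at hq
    obtain ⟨⟨hak, hk0⟩, hbn, hn0⟩ := hq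
    have ha := Nat.pos_of_dvd_of_pos hak (Nat.pos_of_ne_zero hk0)
    have hb := Nat.pos_of_dvd_of_pos hbn (Nat.pos_of_ne_zero hn0)
    have e1 : a * (k / a) = k := Nat.mul_div_cancel' hak
    have e2 : b * ((n - k) / b) = n - k := Nat.mul_div_cancel' hbn
    simp only [mem_filter, mem_reps]
    refine ⟨⟨ha, Nat.div_pos (Nat.le_of_dvd (by omega) hak) ha, hb,
      Nat.div_pos (Nat.le_of_dvd (by omega) hbn) hb, by omega⟩, e1⟩
  · rintro ⟨⟨a, x⟩, b, y⟩ hp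
    simp only [mem_filter, mem_reps] at hp
    obtain ⟨⟨ha, hx, hb, hy, he⟩, hax⟩ := hp
    simp only [mem_product, Nat.mem_divisors]
    have := Nat.mul_pos hb hy
    exact ⟨⟨⟨x, hax.symm⟩, by rw [← hax]; positivity⟩, ⟨y, by omega⟩, by omega⟩
  · rintro ⟨⟨a, x⟩, b, y⟩ hp
    simp only [mem_filter, mem_reps] at hp
    obtain ⟨⟨ha, hx, hb, hy, he⟩, hax⟩ := hp
    simp only [Prod.mk.injEq, true_and]
    rw [← hax, Nat.mul_div_cancel_left _ ha, show n - a * x = b * y by omega,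
      Nat.mul_div_cancel_left _ hb]
    simp

theorem sigmaSeries_one_mul_sigmaSeries_three :
    240 * (sigmaSeries 1 * sigmaSeries 3) =
      21 * sigmaSeries 5 + 10 * sigmaSeries 3 - sigmaSeries 1 - 30 * Dq (sigmaSeries 3) := by
  have inner (e : ℕ) (he : 1 ≤ e) : ∑ a ∈ Ico 1 e,
      -((a : ℚ) ^ 2 + a * (e - a) + (e - a) ^ 2) ^ 2 / 4 =
        (e : ℚ) / 120 - e ^ 3 / 12 + e ^ 4 / 4 - 7 * e ^ 5 / 40 := by
    rw [sum_Ico_eq_sub _ he, sum_range_one]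
    ring_nf
    simp only [sum_add_distrib, ← sum_mul, sum_const, card_range, nsmul_eq_mul,
      sum_range_cast, sum_range_cast_pow_two, sum_range_cast_pow_three, sum_range_cast_pow_four]
    ring
  ext n
  have key := two_mul_sum_reps_of_diag n (fun a b => a * b ^ 3)
    (fun a b => -(a ^ 2 + a * b + b ^ 2) ^ 2 / 4) (-1 / 4) 3 (fun _ _ => by ring)
    (fun _ _ => by ring) (fun _ => by ring)
  rw [sum_congr rfl fun e he => inner e (Nat.pos_of_mem_divisors he)] at key
  simp only [sum_add_distrib, sum_sub_distrib, ← sum_div, ← mul_sum, Nat.reduceAdd] at key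
  simp only [map_add, map_sub, coeff_ofNat_mul, coeff_sigmaSeries_mul, coeff_sigmaSeries,
    coeff_Dq, pow_one]
  linarith

theorem sigmaSeries_one_mul_sigmaSeries_five :
    504 * (sigmaSeries 1 * sigmaSeries 5) =
      20 * sigmaSeries 7 + 21 * sigmaSeries 5 + sigmaSeries 1 - 42 * Dq (sigmaSeries 5) := by
  have inner (e : ℕ) (he : 1 ≤ e) : ∑ a ∈ Ico 1 e,
      (-((a : ℚ) ^ 2 + a * (e - a) + (e - a) ^ 2) ^ 3 / 6 + 7 * (a * (e - a) * e) ^ 2 / 12) =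
        -(e : ℚ) / 252 - e ^ 5 / 12 + e ^ 6 / 6 - 5 * e ^ 7 / 63 := by
    rw [sum_Ico_eq_sub _ he, sum_range_one]
    ring_nf
    simp only [sum_add_distrib, ← sum_mul, sum_const, card_range, nsmul_eq_mul, sum_range_cast,
      sum_range_cast_pow_two, sum_range_cast_pow_four, sum_range_cast_pow_five,
      sum_range_cast_pow_six]
    ring
  ext n
  have key := two_mul_sum_reps_of_diag n (fun a b => a * b ^ 5)
    (fun a b => -(a ^ 2 + a * b + b ^ 2) ^ 3 / 6 + 7 * (a * b * (a + b)) ^ 2 / 12) (-1 / 6) 5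
    (fun _ _ => by ring) (fun _ _ => by ring) (fun _ => by ring)
  simp only [add_sub_cancel] at key
  rw [sum_congr rfl fun e he => inner e (Nat.pos_of_mem_divisors he)] at key
  simp only [sum_add_distrib, sum_sub_distrib, sum_neg_distrib, ← sum_div, ← mul_sum,
    Nat.reduceAdd] at key
  simp only [map_add, map_sub, coeff_ofNat_mul, coeff_sigmaSeries_mul, coeff_sigmaSeries,
    coeff_Dq, pow_one]
  linarith

theorem sigmaSeries_three_mul_sigmaSeries_three :
    120 * (sigmaSeries 3 * sigmaSeries 3) = sigmaSeries 7 - sigmaSeries 3 := by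
  have inner (e : ℕ) (he : 1 ≤ e) : ∑ a ∈ Ico 1 e, -((a : ℚ) * (e - a) * e) ^ 2 / 2 =
        (e : ℚ) ^ 3 / 60 - e ^ 7 / 60 := by
    rw [sum_Ico_eq_sub _ he, sum_range_one]
    ring_nf
    simp only [sum_add_distrib, ← sum_mul, sum_range_cast_pow_two, sum_range_cast_pow_three,
      sum_range_cast_pow_four]
    ring
  ext n
  have key := two_mul_sum_reps_of_diag n (fun a b => a ^ 3 * b ^ 3)
    (fun a b => -(a * b * (a + b)) ^ 2 / 2) 0 0
    (fun _ _ => by ring) (fun _ _ => by ring) (fun _ => by ring)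
  simp only [add_sub_cancel] at key
  rw [sum_congr rfl fun e he => inner e (Nat.pos_of_mem_divisors he)] at key
  simp only [sum_sub_distrib, ← sum_div, Nat.reduceAdd] at key
  simp only [map_sub, coeff_ofNat_mul, coeff_sigmaSeries_mul, coeff_sigmaSeries]
  linarith

theorem E2_eq : E2 = 1 - 24 * sigmaSeries 1 := by
  ext n
  simp only [E2, coeff_mk, map_sub, coeff_one, coeff_ofNat_mul, coeff_sigmaSeries]
  rcases eq_or_ne n 0 with rfl | hn <;> simp [*]

theorem E4_eq : E4 = 1 + 240 * sigmaSeries 3 := by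
  ext n
  simp only [E4, coeff_mk, map_add, coeff_one, coeff_ofNat_mul, coeff_sigmaSeries]
  rcases eq_or_ne n 0 with rfl | hn <;> simp [*]

theorem E6_eq : E6 = 1 - 504 * sigmaSeries 5 := by
  ext n
  simp only [E6, coeff_mk, map_sub, coeff_one, coeff_ofNat_mul, coeff_sigmaSeries]
  rcases eq_or_ne n 0 with rfl | hn <;> simp [*]

theorem three_mul_Dq_E4 : 3 * Dq E4 = E2 * E4 - E6 := by
  rw [E2_eq, E4_eq, E6_eq]
  simp only [Dq_add, Dq_mul, Dq_one, Dq_ofNat]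
  linear_combination 24 * sigmaSeries_one_mul_sigmaSeries_three

theorem two_mul_Dq_E6 : 2 * Dq E6 = E2 * E6 - E4 ^ 2 := by
  rw [E2_eq, E4_eq, E6_eq]
  simp only [Dq_sub, Dq_mul, Dq_one, Dq_ofNat]
  linear_combination
    (-24) * sigmaSeries_one_mul_sigmaSeries_five + 480 * sigmaSeries_three_mul_sigmaSeries_three

theorem serreD_E4 : serreD 4 E4 = -(C (1 / 3) * E6) := by
  have h3 : C (1 / 3 : ℚ) * 3 = 1 := by rw [← map_ofNat C 3, ← map_mul]; norm_num
  rw [serreD, show (4 : ℚ) / 12 = 1 / 3 by norm_num]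
  linear_combination C (1 / 3 : ℚ) * three_mul_Dq_E4 - Dq E4 * h3

theorem serreD_E6 : serreD 6 E6 = -(C (1 / 2) * E4 ^ 2) := by
  have h2 : C (1 / 2 : ℚ) * 2 = 1 := by rw [← map_ofNat C 2, ← map_mul]; norm_num
  rw [serreD, show (6 : ℚ) / 12 = 1 / 2 by norm_num]
  linear_combination C (1 / 2 : ℚ) * two_mul_Dq_E6 - Dq E6 * h2

/-- The operator identity
`K^up_{w+6} ∘ K^up_w = E₄² L_w - ((w+6)/6) E₆ K^up_w + 12(w+1)(w+5) Δ`. -/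
theorem Kup_comp_Kup (w : ℚ) (f : PowerSeries ℚ) :
    Kup (w + 6) (Kup w f) =
      E4 ^ 2 * Lop w f - PowerSeries.C ((w + 6) / 6) * (E6 * Kup w f) +
        PowerSeries.C (12 * (w + 1) * (w + 5)) * (Δmf * f) := by
  have hE4g : serreD (w + 6 - 1) (E4 * serreD (w - 1) f) =
      -(C (1 / 3) * E6) * serreD (w - 1) f + E4 * serreD (w + 1) (serreD (w - 1) f) := by
    rw [show w + 6 - 1 = 4 + (w + 1) by ring, serreD_add_mul, serreD_E4]
  have hE6f : serreD (w + 6 - 1) (E6 * f) =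
      -(C (1 / 2) * E4 ^ 2) * f + E6 * serreD (w - 1) f := by
    rw [show w + 6 - 1 = 6 + (w - 1) by ring, serreD_add_mul, serreD_E6]
  simp only [Kup, Lop, Δmf, serreD_sub, mul_assoc, serreD_C_mul, hE4g, hE6f]
  -- `ring` cannot clear the denominators inside the scalars `C q` in `ℚ⟦X⟧`, but it can in a field.
  apply IsFractionRing.injective ℚ⟦X⟧ (FractionRing ℚ⟦X⟧)
  have hC : ∀ q, algebraMap ℚ⟦X⟧ (FractionRing ℚ⟦X⟧) (C q) =
      algebraMap ℚ (FractionRing ℚ⟦X⟧) q :=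
    fun q => (IsScalarTower.algebraMap_apply ℚ ℚ⟦X⟧ _ q).symm
  have : CharZero (FractionRing ℚ⟦X⟧) :=
    charZero_of_injective_algebraMap (algebraMap ℚ _).injective
  simp only [map_add, map_sub, map_mul, map_neg, map_pow, hC, map_div₀, map_one, map_ofNat]
  ring
end

section
/- Define monic polynomials A_{n,2}(X) by A_{0,2}(X)=1, A_{1,2}(X)=X-720, and A_{n+1,2}(X) = (X - a_n)A_{n,2}(X) - b_n A_{n-1,2}(X) for n ≥ 2 with initial A_{2,2}(X) = X² - 1640X + 269280, where a_n = 24(144n²-29)/((2n+1)(2n-1)) and b_n = 36(12n-13)(12n-7)(12n-5)(12n+1)/(n(n-1)(2n-1)²). Then A_{n,2}(0) = (-12)^{3n+1} (-1/12)_n (5/12)_n / (2n-1)! for all n ≥ 1, where (a)_n denotes the Pochhammer symbol. -/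
open Polynomial

/-- Recursion coefficient `a_{n,2} = 24(144n²-29)/((2n+1)(2n-1))`. -/
noncomputable def a2 (n : ℕ) : ℚ :=
  24 * (144 * (n : ℚ) ^ 2 - 29) / ((2 * (n : ℚ) + 1) * (2 * (n : ℚ) - 1))

/-- Recursion coefficient `b_{n,2} = 36(12n-13)(12n-7)(12n-5)(12n+1)/(n(n-1)(2n-1)²)`. -/
noncomputable def b2 (n : ℕ) : ℚ :=
  36 * (12 * (n : ℚ) - 13) * (12 * (n : ℚ) - 7) * (12 * (n : ℚ) - 5) * (12 * (n : ℚ) + 1) /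
    ((n : ℚ) * ((n : ℚ) - 1) * (2 * (n : ℚ) - 1) ^ 2)

/-- The monic Atkin polynomials `A_{n,2}(X)`, defined by the three-term recursion
`A_{n+1,2} = (X - a_n)A_{n,2} - b_n A_{n-1,2}` for `n ≥ 2`. -/
noncomputable def A2 : ℕ → Polynomial ℚ
  | 0 => 1
  | 1 => X - C 720
  | 2 => X ^ 2 - C 1640 * X + C 269280
  | n + 3 => (X - C (a2 (n + 2))) * A2 (n + 2) - C (b2 (n + 2)) * A2 (n + 1)

/-! Both sides satisfy the same three-term recursion at `X = 0` and agree for `n = 1, 2`.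
For the right-hand side `f n`, the ratio `f (m + 1) / f m = -6 (12m - 1)(12m + 5) / (m (2m + 1))`
reduces the recursion to an identity of rational functions in `n`. -/

noncomputable def A2EvalZeroFormula (n : ℕ) : ℚ :=
  (-12 : ℚ) ^ (3 * n + 1) * (ascPochhammer ℚ n).eval (-1 / 12 : ℚ) *
    (ascPochhammer ℚ n).eval (5 / 12 : ℚ) / ((2 * n - 1).factorial : ℚ)

lemma A2_eval_zero_add_three (n : ℕ) :
    (A2 (n + 3)).eval 0 =
      -a2 (n + 2) * (A2 (n + 2)).eval 0 - b2 (n + 2) * (A2 (n + 1)).eval 0 := by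
  simp [A2]

lemma factorial_two_mul_add_three (n : ℕ) :
    ((2 * n + 3).factorial : ℚ) = (2 * n + 1).factorial * ((2 * n + 2) * (2 * n + 3)) := by
  rw [Nat.factorial_succ, Nat.factorial_succ]
  push_cast
  ring

lemma A2EvalZeroFormula_add_two (n : ℕ) :
    A2EvalZeroFormula (n + 2) =
      -6 * (12 * (n + 1) - 1) * (12 * (n + 1) + 5) / ((n + 1) * (2 * n + 3)) *
        A2EvalZeroFormula (n + 1) := by
  have hfac : 2 * (n + 2) - 1 = 2 * n + 3 := by omega
  have hfac' : 2 * (n + 1) - 1 = 2 * n + 1 := by omega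
  simp only [A2EvalZeroFormula, hfac, hfac', factorial_two_mul_add_three, ascPochhammer_succ_eval]
  have : ((2 * n + 1).factorial : ℚ) ≠ 0 := by positivity
  field_simp
  push_cast
  ring

lemma A2EvalZeroFormula_add_three (n : ℕ) :
    A2EvalZeroFormula (n + 3) =
      -a2 (n + 2) * A2EvalZeroFormula (n + 2) - b2 (n + 2) * A2EvalZeroFormula (n + 1) := by
  rw [A2EvalZeroFormula_add_two (n + 1), A2EvalZeroFormula_add_two n, a2, b2]
  push_cast
  have h₁ : (2 * (n : ℚ) + 3) ≠ 0 := by positivity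
  have h₂ : (2 * (n : ℚ) + 5) ≠ 0 := by positivity
  have h₃ : (2 * ((n : ℚ) + 2) - 1) ≠ 0 := by
    rw [show 2 * ((n : ℚ) + 2) - 1 = 2 * n + 3 by ring]; positivity
  have h₄ : ((n : ℚ) + 2 - 1) ≠ 0 := by
    rw [show (n : ℚ) + 2 - 1 = n + 1 by ring]; positivity
  field_simp
  ring

lemma A2_eval_zero_add_one (n : ℕ) : (A2 (n + 1)).eval 0 = A2EvalZeroFormula (n + 1) := by
  induction n using Nat.twoStepInduction with
  | zero => norm_num [A2, A2EvalZeroFormula, ascPochhammer_succ_eval]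
  | one => norm_num [A2, A2EvalZeroFormula, ascPochhammer_succ_eval, Nat.factorial]
  | more n ih₀ ih₁ => rw [A2_eval_zero_add_three, A2EvalZeroFormula_add_three, ih₀, ih₁]

/-- `A_{n,2}(0) = (-12)^{3n+1} (-1/12)ₙ (5/12)ₙ / (2n-1)!` for all `n ≥ 1`. -/
theorem A2_eval_zero (n : ℕ) (hn : 1 ≤ n) :
    (A2 n).eval 0 =
      (-12 : ℚ) ^ (3 * n + 1) * (ascPochhammer ℚ n).eval (-1 / 12 : ℚ) *
        (ascPochhammer ℚ n).eval (5 / 12 : ℚ) / ((2 * n - 1).factorial : ℚ) := by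
  obtain ⟨n, rfl⟩ := Nat.exists_eq_add_of_le' hn
  exact A2_eval_zero_add_one n
end

section
/- With the Atkin polynomials A_{n,2}(X) as defined by their three-term recursion, A_{n,2}(1728) = -12^{3n+1} (-1/12)_n (7/12)_n / (2n-1)! for all n ≥ 1. -/
open Polynomial

/-! The right-hand side `v n` satisfies `v (n + 1) = ρ n * v n` with
`ρ n = 6(12n - 1)(12n + 7) / (n(2n + 1))`, so the Atkin three-term recurrence for `v` reduces to
the rational-function identity `ρ (n + 1) ρ n = (1728 - a_{n+1}) ρ n - b_{n+1}`. Since `A_{n,2}(1728)`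
satisfies the same recurrence and both agree at `n = 1, 2`, they agree for all `n ≥ 1`. -/

theorem eq_of_three_term_recurrence {α : Type*} (step : ℕ → α → α → α) {f g : ℕ → α}
    (hf : ∀ k, f (k + 3) = step k (f (k + 2)) (f (k + 1)))
    (hg : ∀ k, g (k + 3) = step k (g (k + 2)) (g (k + 1)))
    (h₁ : f 1 = g 1) (h₂ : f 2 = g 2) {n : ℕ} (hn : 1 ≤ n) : f n = g n := by
  have hpair : ∀ k, f (k + 1) = g (k + 1) ∧ f (k + 2) = g (k + 2) := by
    intro k
    induction k with
    | zero => exact ⟨h₁, h₂⟩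
    | succ k ih => exact ⟨ih.2, by rw [hf, hg, ih.1, ih.2]⟩
  obtain ⟨k, rfl⟩ := Nat.exists_eq_add_of_le' hn
  exact (hpair k).1

lemma A2_eval_add_three (k : ℕ) (x : ℚ) :
    (A2 (k + 3)).eval x =
      (x - a2 (k + 2)) * (A2 (k + 2)).eval x - b2 (k + 2) * (A2 (k + 1)).eval x := by
  simp only [A2, eval_sub, eval_mul, eval_X, eval_C]

noncomputable def atkinValue1728 (n : ℕ) : ℚ :=
  -(12 : ℚ) ^ (3 * n + 1) * (ascPochhammer ℚ n).eval (-1 / 12 : ℚ) *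
    (ascPochhammer ℚ n).eval (7 / 12 : ℚ) / ((2 * n - 1).factorial : ℚ)

noncomputable def atkinRatio1728 (n : ℕ) : ℚ :=
  6 * (12 * n - 1) * (12 * n + 7) / (n * (2 * n + 1))

lemma atkinValue1728_one : atkinValue1728 1 = 1008 := by
  norm_num [atkinValue1728]

lemma atkinValue1728_succ {n : ℕ} (hn : n ≠ 0) :
    atkinValue1728 (n + 1) = atkinRatio1728 n * atkinValue1728 n := by
  have hfact : (2 * (n + 1) - 1).factorial = (2 * n + 1) * (2 * n) * (2 * n - 1).factorial := by
    rw [show 2 * (n + 1) - 1 = 2 * n - 1 + 1 + 1 by omega, Nat.factorial_succ, Nat.factorial_succ,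
      show 2 * n - 1 + 1 = 2 * n by omega]
    ring
  have hn' : (n : ℚ) ≠ 0 := by exact_mod_cast hn
  simp only [atkinValue1728, atkinRatio1728, ascPochhammer_succ_eval, hfact]
  push_cast
  field_simp
  ring

lemma atkinRatio1728_recurrence {n : ℕ} (hn : n ≠ 0) :
    atkinRatio1728 (n + 1) * atkinRatio1728 n =
      (1728 - a2 (n + 1)) * atkinRatio1728 n - b2 (n + 1) := by
  have hn' : (n : ℚ) ≠ 0 := by exact_mod_cast hn
  have h₁ : (2 * n + 1 : ℚ) ≠ 0 := by positivity
  have h₃ : (2 * n + 3 : ℚ) ≠ 0 := by positivity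
  have hsucc : (n + 1 : ℚ) ≠ 0 := by positivity
  simp only [atkinRatio1728, a2, b2]
  push_cast
  rw [show 2 * ((n : ℚ) + 1) - 1 = 2 * n + 1 by ring, show (n : ℚ) + 1 - 1 = n by ring]
  field_simp
  ring

lemma atkinValue1728_add_three (k : ℕ) :
    atkinValue1728 (k + 3) =
      (1728 - a2 (k + 2)) * atkinValue1728 (k + 2) - b2 (k + 2) * atkinValue1728 (k + 1) := by
  rw [atkinValue1728_succ (by omega : k + 2 ≠ 0), atkinValue1728_succ (by omega : k + 1 ≠ 0),
    ← mul_assoc, atkinRatio1728_recurrence (by omega : k + 1 ≠ 0)]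
  ring

/-- `A_{n,2}(1728) = -12^{3n+1} (-1/12)ₙ (7/12)ₙ / (2n-1)!` for all `n ≥ 1`. -/
theorem A2_eval_1728 (n : ℕ) (hn : 1 ≤ n) :
    (A2 n).eval 1728 =
      -(12 : ℚ) ^ (3 * n + 1) * (ascPochhammer ℚ n).eval (-1 / 12 : ℚ) *
        (ascPochhammer ℚ n).eval (7 / 12 : ℚ) / ((2 * n - 1).factorial : ℚ) := by
  refine eq_of_three_term_recurrence (fun k u v ↦ (1728 - a2 (k + 2)) * u - b2 (k + 2) * v)
    (f := fun n ↦ (A2 n).eval 1728) (fun k ↦ A2_eval_add_three k 1728)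
    atkinValue1728_add_three ?_ ?_ hn
  · rw [atkinValue1728_one]
    norm_num [A2]
  · rw [atkinValue1728_succ one_ne_zero, atkinValue1728_one]
    norm_num [A2, atkinRatio1728]
end

section
/- Define the Atkin-like polynomials A_{n,6}(X) by A_{0,6}=1, A_{1,6}(X)=X-1266, and A_{n+1,6}(X) = (X - a_{n+1/2,0})A_{n,6}(X) - b_{n+1/2,0}A_{n-1,6}(X) for n ≥ 1, where a_{m,0} = 24(144m²-41)/((2m+1)(2m-1)) and b_{m,0} = 36(12m-11)(12m-7)(12m-5)(12m-1)/(m(m-1)(2m-1)²) evaluated at m = n+1/2. Then A_{n,6}(1728) = 12^{3n} (7/12)_n (11/12)_n / (2n)! for all n ≥ 0. -/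
open Polynomial

/-- Recursion coefficient `a_{n,6} = a_{n+1/2,0} = 24(144(n+1/2)²-41)/((2n+2)(2n))`. -/
noncomputable def a6 (n : ℕ) : ℚ :=
  24 * (144 * ((n : ℚ) + 1 / 2) ^ 2 - 41) / ((2 * (n : ℚ) + 2) * (2 * (n : ℚ)))

/-- Recursion coefficient `b_{n,6} = b_{n+1/2,0} = 36(12n-5)(12n-1)(12n+1)(12n+5)/((n+1/2)(n-1/2)(2n)²)`. -/
noncomputable def b6 (n : ℕ) : ℚ :=
  36 * (12 * (n : ℚ) - 5) * (12 * (n : ℚ) - 1) * (12 * (n : ℚ) + 1) * (12 * (n : ℚ) + 5) /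
    (((n : ℚ) + 1 / 2) * ((n : ℚ) - 1 / 2) * (2 * (n : ℚ)) ^ 2)

/-- The monic Atkin-like polynomials `A_{n,6}(X)`, defined by the three-term recursion
`A_{n+1,6} = (X - a_{n+1/2,0})A_{n,6} - b_{n+1/2,0} A_{n-1,6}` for `n ≥ 1`. -/
noncomputable def A6 : ℕ → Polynomial ℚ
  | 0 => 1
  | 1 => X - C 1266
  | n + 2 => (X - C (a6 (n + 1))) * A6 (n + 1) - C (b6 (n + 1)) * A6 n

/-!
The right-hand side `c n` is hypergeometric: `c (n+1) = r n * c n` with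
`r n = 12(12n+7)(12n+11)/((2n+1)(2n+2))`. Substituting this into the three-term recursion at
`X = 1728` reduces it to the rational identity `r (n+1) * r n = (1728 - a6 (n+1)) * r n - b6 (n+1)`;
the initial values match since `c 1 = 462 = 1728 - 1266`.
-/

noncomputable def A6EvalClosedForm (n : ℕ) : ℚ :=
  (12 : ℚ) ^ (3 * n) * (ascPochhammer ℚ n).eval (7 / 12 : ℚ) *
    (ascPochhammer ℚ n).eval (11 / 12 : ℚ) / ((2 * n).factorial : ℚ)

noncomputable def A6EvalRatio (n : ℕ) : ℚ :=
  12 * (12 * n + 7) * (12 * n + 11) / ((2 * n + 1) * (2 * n + 2))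

theorem A6EvalClosedForm_succ (n : ℕ) :
    A6EvalClosedForm (n + 1) = A6EvalRatio n * A6EvalClosedForm n := by
  have hfac : ((2 * (n + 1)).factorial : ℚ) = (2 * n + 2) * (2 * n + 1) * (2 * n).factorial := by
    rw [show 2 * (n + 1) = 2 * n + 1 + 1 by ring, Nat.factorial_succ, Nat.factorial_succ]
    push_cast
    ring
  simp only [A6EvalClosedForm, A6EvalRatio, ascPochhammer_succ_eval, hfac,
    show 3 * (n + 1) = 3 * n + 3 by ring, pow_add]
  field_simp
  ring

theorem A6EvalRatio_recurrence (n : ℕ) :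
    A6EvalRatio (n + 1) * A6EvalRatio n = (1728 - a6 (n + 1)) * A6EvalRatio n - b6 (n + 1) := by
  simp only [A6EvalRatio, a6, b6]
  rw [show ((n + 1 : ℕ) : ℚ) - 1 / 2 = (2 * n + 1) / 2 by push_cast; ring]
  push_cast
  field_simp
  ring

theorem A6EvalClosedForm_recurrence (n : ℕ) :
    A6EvalClosedForm (n + 2) =
      (1728 - a6 (n + 1)) * A6EvalClosedForm (n + 1) - b6 (n + 1) * A6EvalClosedForm n := by
  simp only [A6EvalClosedForm_succ]
  linear_combination A6EvalClosedForm n * A6EvalRatio_recurrence n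

/-- `A_{n,6}(1728) = 12^{3n} (7/12)ₙ (11/12)ₙ / (2n)!` for all `n ≥ 0`. -/
theorem A6_eval_1728 (n : ℕ) :
    (A6 n).eval 1728 =
      (12 : ℚ) ^ (3 * n) * (ascPochhammer ℚ n).eval (7 / 12 : ℚ) *
        (ascPochhammer ℚ n).eval (11 / 12 : ℚ) / ((2 * n).factorial : ℚ) := by
  change (A6 n).eval 1728 = A6EvalClosedForm n
  induction n using Nat.twoStepInduction with
  | zero => simp [A6, A6EvalClosedForm]
  | one => norm_num [A6, A6EvalClosedForm, ascPochhammer_one]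
  | more n ih0 ih1 =>
    rw [A6EvalClosedForm_recurrence, ← ih0, ← ih1]
    simp only [A6, eval_sub, eval_mul, eval_X, eval_C]
end

section
/- Let L be a linear functional on polynomials with monic orthogonal polynomial system p_n (so L(p_m p_n) = 0 for m ≠ n and L(p_n²) ≠ 0), satisfying the three-term recursion p_{n+1}(x) = (x-a_n)p_n(x) - b_n p_{n-1}(x). Fix λ with p_n(λ) ≠ 0 for all n, and define q_n(x) = (p_{n+1}(x) - (p_{n+1}(λ)/p_n(λ))p_n(x))/(x-λ) (a polynomial of degree n). Then q_n is the monic orthogonal polynomial system for the linear functional L*(f(x)) = L((x-λ)f(x)), i.e., L*(q_m q_n) = 0 for all m ≠ n. -/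
open Polynomial

/-- Christoffel transform of orthogonal polynomials.  Let `L` be a linear functional on
`ℝ[x]` with monic orthogonal polynomial system `p n` satisfying a three-term recursion,
let `λ` be such that `p n (λ) ≠ 0` for all `n`, and let
`q n = (p (n+1) - (p (n+1)(λ)/p n (λ)) p n)/(x - λ)` (exact polynomial division).
Then `q n` is the monic orthogonal polynomial system for `L*(f) = L((x-λ)f)`:
each `q n` is monic of degree `n` and `L*(q m q n) = 0` for `m ≠ n`. -/
theorem christoffel_transform (L : Polynomial ℝ →ₗ[ℝ] ℝ) (p q : ℕ → Polynomial ℝ)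
    (a b : ℕ → ℝ) (lam : ℝ)
    (hmonic : ∀ n, (p n).Monic) (hdeg : ∀ n, (p n).natDegree = n)
    (horth : ∀ m n, m ≠ n → L (p m * p n) = 0)
    (hnorm : ∀ n, L (p n ^ 2) ≠ 0)
    (hrec : ∀ n, 1 ≤ n → p (n + 1) = (X - C (a n)) * p n - C (b n) * p (n - 1))
    (hlam : ∀ n, (p n).eval lam ≠ 0)
    (hq : ∀ n, (X - C lam) * q n =
      p (n + 1) - C ((p (n + 1)).eval lam / (p n).eval lam) * p n) :
    (∀ n, (q n).Monic ∧ (q n).natDegree = n) ∧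
      ∀ m n, m ≠ n → L ((X - C lam) * (q m * q n)) = 0 := by
  have hpdeg : ∀ n, (p n).degree = (n : ℕ) := by
    intro n
    rw [degree_eq_natDegree (hmonic n).ne_zero, hdeg n]
  -- L kills (p k) * f whenever natDegree f < k
  have aux : ∀ (d : ℕ) (f : Polynomial ℝ), f.natDegree ≤ d → ∀ k, d < k →
      L (p k * f) = 0 := by
    intro d
    induction d using Nat.strong_induction_on with
    | _ d ih =>
      intro f hf k hk
      by_cases h0 : f = 0
      · simp [h0]
      · set e := f.natDegree with he
        set c := f.leadingCoeff with hc
        have hc0 : c ≠ 0 := leadingCoeff_ne_zero.mpr h0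
        have hLmain : L (p k * (C c * p e)) = 0 := by
          have : p k * (C c * p e) = c • (p k * p e) := by
            rw [smul_eq_C_mul]; ring
          rw [this, map_smul, horth k e (by omega), smul_eq_mul, mul_zero]
        have hdf : f.degree = (e : ℕ) := degree_eq_natDegree h0
        have hdc : (C c * p e).degree = (e : ℕ) := by
          rw [degree_C_mul hc0, hpdeg]
        have hlc : f.leadingCoeff = (C c * p e).leadingCoeff := by
          rw [leadingCoeff_mul, (hmonic e).leadingCoeff, mul_one, leadingCoeff_C]
        set g := f - C c * p e with hg
        have hsplit : p k * f = p k * (C c * p e) + p k * g := by rw [hg]; ring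
        by_cases hg0 : g = 0
        · rw [hsplit, hg0, mul_zero, map_add, map_zero, add_zero, hLmain]
        · have hdg : g.degree < f.degree := degree_sub_lt (hdf.trans hdc.symm) h0 hlc
          have hng : g.natDegree < e := by
            have := natDegree_lt_natDegree hg0 hdg
            omega
          have hLg : L (p k * g) = 0 :=
            ih g.natDegree (by omega) g le_rfl k (by omega)
          rw [hsplit, map_add, hLmain, hLg, add_zero]
  -- the RHS of hq is monic of degree n+1
  have key : ∀ n, ((X - C lam) * q n).Monic ∧ ((X - C lam) * q n).natDegree = n + 1 := by
    intro n
    rw [hq n]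
    set c := (p (n + 1)).eval lam / (p n).eval lam with hcdef
    have hlt : (C c * p n).degree < (p (n + 1)).degree := by
      calc (C c * p n).degree ≤ (C c).degree + (p n).degree := degree_mul_le _ _
        _ ≤ 0 + (n : ℕ) := add_le_add degree_C_le (le_of_eq (hpdeg n))
        _ < ((n + 1 : ℕ) : WithBot ℕ) := by
            rw [zero_add]; exact_mod_cast Nat.lt_succ_self n
        _ = (p (n + 1)).degree := (hpdeg (n + 1)).symm
    constructor
    · have := (hmonic (n + 1)).add_of_left (q := -(C c * p n)) (by rwa [degree_neg])
      rwa [← sub_eq_add_neg] at this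
    · have hd : (p (n + 1) - C c * p n).degree = (p (n + 1)).degree :=
        degree_sub_eq_left_of_degree_lt hlt
      have : (p (n + 1) - C c * p n).degree = ((n + 1 : ℕ) : WithBot ℕ) := by
        rw [hd, hpdeg]
      exact natDegree_eq_of_degree_eq_some this
  have hqmonic : ∀ n, (q n).Monic := fun n =>
    (monic_X_sub_C lam).of_mul_monic_left (key n).1
  have hqdeg : ∀ n, (q n).natDegree = n := by
    intro n
    have h := (key n).2
    rw [natDegree_mul (X_sub_C_ne_zero lam) (hqmonic n).ne_zero,
      natDegree_X_sub_C] at h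
    omega
  refine ⟨fun n => ⟨hqmonic n, hqdeg n⟩, ?_⟩
  have main : ∀ m n, n < m → L ((X - C lam) * (q m * q n)) = 0 := by
    intro m n hlt
    have h1 : (X - C lam) * (q m * q n) = ((X - C lam) * q m) * q n := by ring
    set c := (p (m + 1)).eval lam / (p m).eval lam with hcdef
    have h2 : ((X - C lam) * q m) * q n
        = p (m + 1) * q n + (-c) • (p m * q n) := by
      rw [hq m, smul_eq_C_mul, map_neg]; ring
    rw [h1, h2, map_add, map_smul,
      aux n (q n) (le_of_eq (hqdeg n)) (m + 1) (by omega),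
      aux n (q n) (le_of_eq (hqdeg n)) m hlt, smul_zero, add_zero]
  intro m n hmn
  rcases Nat.lt_or_ge n m with h | h
  · exact main m n h
  · have hlt : m < n := lt_of_le_of_ne h hmn
    rw [mul_comm (q m) (q n)]
    exact main n m hlt
end
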